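/- Let N, m be natural numbers with m < N and fix an index x : Fin N. The number of choice sequences of length m+1 after which x is not selected equals (N − m − 1) times the number of choice sequences of length m after which x is not selected. (This is the recurrence underlying the induction: the not-selected count is multiplied by N−m−1 out of the N−m possible extensions at each step.) -/

import Mathlib

/-- The permutation of `Fin N` produced by `k` iterations of the partial
Fisher–Yates shuffle driven by the choice sequence `j`: iteration `t`
(for `t = 0, …, k-1`) swaps the array entries at positions `N-1-t` and
`j t`, the iterations being performed left-to-right (`t = 0` first).
As a permutation this is `swap (N-1) (j 0) * ⋯ * swap (N-1-(k-1)) (j (k-1))`,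
so that `fyPerm N k j p` is the final content of array slot `p` when the
array is initialized with `a[p] = p`. -/
def fyPerm (N k : ℕ) (j : ∀ t : Fin k, Fin (N - (t : ℕ))) : Equiv.Perm (Fin N) :=
  (List.ofFn fun t : Fin k =>
      Equiv.swap
        (⟨N - 1 - (t : ℕ), by have := (j t).isLt; omega⟩ : Fin N)
        (⟨((j t) : ℕ), by have := (j t).isLt; omega⟩ : Fin N)).prod

/-! After `m` iterations of the shuffle, `x` is not yet selected iff its slot `y` lies in the
unshuffled prefix `[0, N - m)`. The next iteration swaps slot `N - 1 - m` with a uniform slot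
`b < N - m`, so `x` stays unselected iff `b ≠ y`: exactly `N - m - 1` of the `N - m` draws. -/

open Finset

theorem Fin.card_filter_snoc {m : ℕ} {α : Fin (m + 1) → Type*} [∀ i, Fintype (α i)]
    (P : (∀ i, α i) → Prop) [DecidablePred P] :
    #{j | P j} = ∑ j : ∀ i : Fin m, α i.castSucc, #{b : α (Fin.last m) | P (Fin.snoc j b)} := by
  have h : #{j | P j} = #{p : α (Fin.last m) × (∀ i : Fin m, α i.castSucc) | P (Fin.snoc p.2 p.1)} :=
    (card_equiv (Fin.snocEquiv α) fun p => by simp [Fin.snocEquiv]).symm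
  rw [h, card_filter, Fintype.sum_prod_type, sum_comm]
  simp only [card_filter]

theorem Equiv.swap_apply_lt_iff {N : ℕ} {a b y : Fin N} (hba : b ≤ a) :
    swap a b y < a ↔ y ≤ a ∧ y ≠ b := by
  rcases eq_or_ne y a with rfl | hya
  · rw [swap_apply_left]
    exact ⟨fun h => ⟨le_rfl, h.ne'⟩, fun h => lt_of_le_of_ne hba h.2.symm⟩
  rcases eq_or_ne y b with rfl | hyb
  · simp [swap_apply_right]
  · rw [swap_apply_of_ne_of_ne hya hyb]
    exact ⟨fun h => ⟨h.le, hyb⟩, fun h => lt_of_le_of_ne h.1 hya⟩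

theorem fyPerm_snoc {N m : ℕ} (j : ∀ t : Fin m, Fin (N - (t : ℕ))) (b : Fin (N - m)) :
    fyPerm N (m + 1) (Fin.snoc (α := fun t : Fin (m + 1) => Fin (N - (t : ℕ))) j b)
      = fyPerm N m j *
        Equiv.swap (⟨N - 1 - m, by have := b.isLt; omega⟩ : Fin N)
          (⟨b, by have := b.isLt; omega⟩ : Fin N) := by
  unfold fyPerm
  rw [List.ofFn_succ', List.prod_concat]
  congr 1 <;> simp [Fin.snoc]

theorem fyPerm_snoc_inv_apply_lt_iff {N m : ℕ} (j : ∀ t : Fin m, Fin (N - (t : ℕ)))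
    (b : Fin (N - m)) (x : Fin N) :
    (((fyPerm N (m + 1) (Fin.snoc (α := fun t : Fin (m + 1) => Fin (N - (t : ℕ))) j b))⁻¹ x
        : Fin N) : ℕ) < N - (m + 1) ↔
      (((fyPerm N m j)⁻¹ x : Fin N) : ℕ) < N - m ∧ (b : ℕ) ≠ (fyPerm N m j)⁻¹ x := by
  have hb := b.isLt
  rw [fyPerm_snoc, mul_inv_rev, Equiv.swap_inv, Equiv.Perm.mul_apply]
  set y := (fyPerm N m j)⁻¹ x
  have key := Equiv.swap_apply_lt_iff (a := ⟨N - 1 - m, by omega⟩) (b := ⟨b, by omega⟩) (y := y)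
    (Fin.mk_le_mk.mpr (by omega))
  simp only [Fin.lt_def, Fin.le_def, ne_eq, Fin.ext_iff] at key
  omega

theorem card_filter_fyPerm_snoc_not_selected {N m : ℕ} (j : ∀ t : Fin m, Fin (N - (t : ℕ)))
    (x : Fin N) :
    #{b : Fin (N - m) | (((fyPerm N (m + 1)
        (Fin.snoc (α := fun t : Fin (m + 1) => Fin (N - (t : ℕ))) j b))⁻¹ x : Fin N) : ℕ)
          < N - (m + 1)} =
      if (((fyPerm N m j)⁻¹ x : Fin N) : ℕ) < N - m then N - m - 1 else 0 := by
  simp only [fyPerm_snoc_inv_apply_lt_iff]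
  set y := (fyPerm N m j)⁻¹ x
  split_ifs with hy
  · have hfiber : ({b : Fin (N - m) | (y : ℕ) < N - m ∧ (b : ℕ) ≠ y} : Finset _) = univ.erase ⟨y, hy⟩ := by
      ext b
      simp [hy, Fin.ext_iff]
    rw [hfiber, card_erase_of_mem (mem_univ _), card_univ, Fintype.card_fin]
  · simp [hy]

theorem fy_not_selected_recurrence_general (N m : ℕ) (x : Fin N) :
    (Finset.univ.filter fun j : ∀ t : Fin (m + 1), Fin (N - (t : ℕ)) =>
        (((fyPerm N (m + 1) j)⁻¹ x : Fin N) : ℕ) < N - (m + 1)).card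
      = (N - m - 1) *
        (Finset.univ.filter fun j : ∀ t : Fin m, Fin (N - (t : ℕ)) =>
          (((fyPerm N m j)⁻¹ x : Fin N) : ℕ) < N - m).card := by
  rw [Fin.card_filter_snoc]
  calc _ = ∑ j : ∀ t : Fin m, Fin (N - (t : ℕ)),
          if (((fyPerm N m j)⁻¹ x : Fin N) : ℕ) < N - m then N - m - 1 else 0 :=
        sum_congr rfl fun j _ => card_filter_fyPerm_snoc_not_selected j x
    _ = _ := by rw [← sum_filter, sum_const, smul_eq_mul, mul_comm]

/-- The recurrence underlying the induction: for `m < N` and a fixed index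
`x : Fin N`, the number of choice sequences of length `m+1` after which
`x` is not selected equals `N - m - 1` times the number of choice sequences
of length `m` after which `x` is not selected. -/
theorem fy_not_selected_recurrence (N m : ℕ) (hm : m < N) (x : Fin N) :
    (Finset.univ.filter fun j : ∀ t : Fin (m + 1), Fin (N - (t : ℕ)) =>
        (((fyPerm N (m + 1) j)⁻¹ x : Fin N) : ℕ) < N - (m + 1)).card
      = (N - m - 1) *
        (Finset.univ.filter fun j : ∀ t : Fin m, Fin (N - (t : ℕ)) =>
          (((fyPerm N m j)⁻¹ x : Fin N) : ℕ) < N - m).card :=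
  fy_not_selected_recurrence_general N m x
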